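/- arXiv:2506.18754 — 3 statements merged into one kernel-verified Lean document; each statement's English description precedes it below -/
import Mathlib

section
/- Fix δ < ε, a vertex i ∈ C₁, and a vertex j ∈ C₂ with A_{ij}=0. If Σ_{ℓ∈C₁} A_{iℓ} - Σ_{ℓ∈C₂} A_{iℓ} ≤ δ·log n and Σ_{ℓ∈C₂} A_{jℓ} - Σ_{ℓ∈C₁} A_{jℓ} ≤ -ε·log n, with δ, ε > 0 and log n > 0, then z(σ*_{i↔j}) > z(σ*), i.e., the event F_i(δ) ∩ G_j(ε) is contained in the event E_{ij} = {z(σ*_{i↔j}) > z(σ*)}. -/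
open Finset
open scoped Classical

/-- Sum of a function supported on two points. -/
lemma sum_two {n : ℕ} {i j : Fin n} (hij : i ≠ j) (f : Fin n → ℝ)
    (h : ∀ u, u ≠ i → u ≠ j → f u = 0) : ∑ u, f u = f i + f j := by
  rw [← Finset.sum_subset (Finset.subset_univ ({i, j} : Finset (Fin n)))]
  · rw [Finset.sum_pair hij]
  · intro x _ hx
    simp only [Finset.mem_insert, Finset.mem_singleton, not_or] at hx
    exact h x hx.1 hx.2

/-- `F_i(δ) ∩ G_j(ε) ⊆ E_{ij}`: if `Σ_{ℓ∈C₁}A_{iℓ} - Σ_{ℓ∈C₂}A_{iℓ} ≤ δ log n`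
and `Σ_{ℓ∈C₂}A_{jℓ} - Σ_{ℓ∈C₁}A_{jℓ} ≤ -ε log n` with `0 < δ < ε` and `log n > 0`,
then swapping the labels of `i` and `j` strictly increases the objective `z`. -/
theorem FG_subset_E {n : ℕ} (A : Fin n → Fin n → ℝ)
    (hsym : ∀ u v, A u v = A v u)
    (hdiag : ∀ u, A u u = 0)
    (h01 : ∀ u v, A u v = 0 ∨ A u v = 1)
    (σ : Fin n → ℝ) (hσ : ∀ u, σ u = 1 ∨ σ u = -1)
    (i j : Fin n) (hi : σ i = 1) (hj : σ j = -1) (hAij : A i j = 0)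
    (σ' : Fin n → ℝ)
    (hσ' : ∀ u, σ' u = if u = i then -1 else if u = j then 1 else σ u)
    (δ ε : ℝ) (hδ : 0 < δ) (hδε : δ < ε) (hlog : 0 < Real.log n)
    (hF : (∑ ℓ ∈ Finset.univ.filter (fun ℓ => σ ℓ = 1), A i ℓ)
        - (∑ ℓ ∈ Finset.univ.filter (fun ℓ => σ ℓ = -1), A i ℓ) ≤ δ * Real.log n)
    (hG : (∑ ℓ ∈ Finset.univ.filter (fun ℓ => σ ℓ = -1), A j ℓ)
        - (∑ ℓ ∈ Finset.univ.filter (fun ℓ => σ ℓ = 1), A j ℓ) ≤ -ε * Real.log n) :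
    (∑ u, ∑ v, A u v * σ' u * σ' v) > (∑ u, ∑ v, A u v * σ u * σ v) := by
  classical
  have hij : i ≠ j := by
    intro h; rw [h, hj] at hi; norm_num at hi
  set d : Fin n → ℝ := fun u => σ' u - σ u with hd
  have hdi : d i = -2 := by simp [hd, hσ' i, hi]; norm_num
  have hdj : d j = 2 := by simp [hd, hσ' j, hij.symm, hj]; norm_num
  have hd0 : ∀ u, u ≠ i → u ≠ j → d u = 0 := by
    intro u h1 h2; simp [hd, hσ' u, h1, h2]
  have hs : ∀ u, σ' u = σ u + d u := fun u => by simp [hd]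
  set S : Fin n → ℝ := fun u => ∑ v, A u v * σ v with hS
  have hT1 : (∑ u, ∑ v, A u v * d u * σ v) = -2 * S i + 2 * S j := by
    have h1 : ∀ u, (∑ v, A u v * d u * σ v) = d u * S u := by
      intro u; rw [hS, Finset.mul_sum]
      exact Finset.sum_congr rfl fun v _ => by ring
    rw [Finset.sum_congr rfl (fun u _ => h1 u),
      sum_two hij _ (fun u ha hb => by rw [hd0 u ha hb]; ring), hdi, hdj]
  have hT2 : (∑ u, ∑ v, A u v * σ u * d v) = -2 * S i + 2 * S j := by
    rw [Finset.sum_comm]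
    have h1 : ∀ v, (∑ u, A u v * σ u * d v) = d v * S v := by
      intro v; rw [hS, Finset.mul_sum]
      exact Finset.sum_congr rfl fun u _ => by rw [hsym u v]; ring
    rw [Finset.sum_congr rfl (fun v _ => h1 v),
      sum_two hij _ (fun u ha hb => by rw [hd0 u ha hb]; ring), hdi, hdj]
  have hT3 : (∑ u, ∑ v, A u v * d u * d v) = 0 := by
    have h1 : ∀ u, (∑ v, A u v * d u * d v) = d u * (A u i * d i + A u j * d j) := by
      intro u
      rw [sum_two hij (fun v => A u v * d u * d v)
        (fun v ha hb => by simp [hd0 v ha hb])]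
      ring
    rw [Finset.sum_congr rfl (fun u _ => h1 u),
      sum_two hij _ (fun u ha hb => by rw [hd0 u ha hb]; ring)]
    rw [hdiag i, hdiag j, hAij, hsym j i, hAij]
    ring
  have hz : (∑ u, ∑ v, A u v * σ' u * σ' v)
      = (∑ u, ∑ v, A u v * σ u * σ v)
        + ((∑ u, ∑ v, A u v * d u * σ v) + ((∑ u, ∑ v, A u v * σ u * d v)
          + (∑ u, ∑ v, A u v * d u * d v))) := by
    have h1 : ∀ u, (∑ v, A u v * σ' u * σ' v)
        = (∑ v, A u v * σ u * σ v)
          + ((∑ v, A u v * d u * σ v) + ((∑ v, A u v * σ u * d v)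
            + (∑ v, A u v * d u * d v))) := by
      intro u
      rw [← Finset.sum_add_distrib, ← Finset.sum_add_distrib, ← Finset.sum_add_distrib]
      exact Finset.sum_congr rfl fun v _ => by rw [hs u, hs v]; ring
    rw [Finset.sum_congr rfl (fun u _ => h1 u), Finset.sum_add_distrib,
      Finset.sum_add_distrib, Finset.sum_add_distrib]
  have split : ∀ u, S u = (∑ ℓ ∈ Finset.univ.filter (fun ℓ => σ ℓ = 1), A u ℓ)
      - (∑ ℓ ∈ Finset.univ.filter (fun ℓ => σ ℓ = -1), A u ℓ) := by
    intro u
    have hfilt : Finset.univ.filter (fun ℓ => σ ℓ = -1)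
        = Finset.univ.filter (fun ℓ => ¬ σ ℓ = 1) := by
      apply Finset.filter_congr
      intro x _
      rcases hσ x with h | h <;> simp [h] <;> norm_num
    have h1 : (∑ v ∈ Finset.univ.filter (fun ℓ => σ ℓ = 1), A u v * σ v)
        = ∑ v ∈ Finset.univ.filter (fun ℓ => σ ℓ = 1), A u v :=
      Finset.sum_congr rfl fun v hv => by
        rw [(Finset.mem_filter.mp hv).2]; ring
    have h2 : (∑ v ∈ Finset.univ.filter (fun ℓ => ¬ σ ℓ = 1), A u v * σ v)
        = ∑ v ∈ Finset.univ.filter (fun ℓ => ¬ σ ℓ = 1), (- A u v) :=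
      Finset.sum_congr rfl fun v hv => by
        have hv2 := (Finset.mem_filter.mp hv).2
        rcases hσ v with h | h
        · exact absurd h hv2
        · rw [h]; ring
    rw [hS]
    calc (∑ v, A u v * σ v)
        = (∑ v ∈ Finset.univ.filter (fun ℓ => σ ℓ = 1), A u v * σ v)
          + (∑ v ∈ Finset.univ.filter (fun ℓ => ¬ σ ℓ = 1), A u v * σ v) :=
          (Finset.sum_filter_add_sum_filter_not _ _ _).symm
      _ = (∑ ℓ ∈ Finset.univ.filter (fun ℓ => σ ℓ = 1), A u ℓ)
          - (∑ ℓ ∈ Finset.univ.filter (fun ℓ => σ ℓ = -1), A u ℓ) := by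
          rw [h1, h2, Finset.sum_neg_distrib, hfilt, ← sub_eq_add_neg]
  have hSi : S i ≤ δ * Real.log n := by rw [split i]; exact hF
  have hSj : ε * Real.log n ≤ S j := by rw [split j]; linarith [hG]
  have hpos : 0 < (ε - δ) * Real.log n := mul_pos (by linarith) hlog
  rw [hz, hT1, hT2, hT3]
  nlinarith [hSi, hSj, hpos]
end

section
/- Consider the SDP maximize ⟨A, X⟩ subject to X ⪰ 0, X_{ii} ≤ a², X_{ij} ≥ ab for all i,j, ⟨I, X⟩ = (n/2)(a²+b²), ⟨J, X⟩ = (n²/4)(a+b)². Suppose there exist a diagonal matrix H* = diag(h*) with h* ≥ 0, a symmetric entrywise-nonnegative matrix B*, and reals η*, λ* such that S* := H* - B* - A + η*I + λ*J satisfies: S* ⪰ 0, λ₂(S*) > 0 (the second-smallest eigenvalue is positive), S*x* = 0, h*_i(X*_{ii} - a²) = 0 for all i, and B*_{ij}(X*_{ij} - ab) = 0 for all i,j, where X* = x*x*^T with x*_i = a on C₁ and b on C₂ (b < 0 < a, a ≠ -b). Then X* is the unique optimal solution of the SDP. -/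
open Finset Matrix

/-- Feasibility for the asymmetric SDP: `X ⪰ 0`, `X_{ii} ≤ a²`, `X_{ij} ≥ ab`,
`⟨I, X⟩ = (n/2)(a² + b²)`, `⟨J, X⟩ = (n²/4)(a+b)²`. -/
def FeasibleSDP (n : ℕ) (a b : ℝ) (X : Matrix (Fin n) (Fin n) ℝ) : Prop :=
  X.PosSemidef ∧ (∀ i, X i i ≤ a ^ 2) ∧ (∀ i j, a * b ≤ X i j) ∧
  Matrix.trace X = ((n : ℝ) / 2) * (a ^ 2 + b ^ 2) ∧
  (∑ i, ∑ j, X i j) = ((n : ℝ) ^ 2 / 4) * (a + b) ^ 2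

lemma aux_psd_vecMulVec (n : ℕ) (x : Fin n → ℝ) : (Matrix.vecMulVec x x).PosSemidef := by
  rw [Matrix.posSemidef_iff_dotProduct_mulVec]
  constructor
  · ext i j
    simp [Matrix.vecMulVec_apply, mul_comm]
  · intro v
    have : star v ⬝ᵥ (Matrix.vecMulVec x x) *ᵥ v = (x ⬝ᵥ v) * (x ⬝ᵥ v) := by
      simp [dotProduct, Matrix.mulVec, Matrix.vecMulVec_apply, Finset.mul_sum,
        Finset.sum_mul, mul_assoc, mul_comm, mul_left_comm]
    rw [this]
    exact mul_self_nonneg _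

lemma aux_trace_mul_eq {n : ℕ} (M N : Matrix (Fin n) (Fin n) ℝ) :
    Matrix.trace (M * N) = ∑ i, ∑ j, M i j * N j i := by
  simp [Matrix.trace, Matrix.mul_apply, Matrix.diag]

lemma aux_ker_lem {n : ℕ} (S : Matrix (Fin n) (Fin n) ℝ) (x : Fin n → ℝ) (hxx : x ⬝ᵥ x ≠ 0)
    (hlam2 : ∀ y : Fin n → ℝ, y ≠ 0 → y ⬝ᵥ x = 0 → 0 < y ⬝ᵥ S.mulVec y)
    (hSx : S.mulVec x = 0) (v : Fin n → ℝ) (hv : S.mulVec v = 0) :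
    v = ((v ⬝ᵥ x) / (x ⬝ᵥ x)) • x := by
  set c := (v ⬝ᵥ x) / (x ⬝ᵥ x) with hc
  set w := v - c • x with hwdef
  have hw : S.mulVec w = 0 := by
    simp [hwdef, Matrix.mulVec_sub, Matrix.mulVec_smul, hv, hSx]
  have hwx : w ⬝ᵥ x = 0 := by
    have : w ⬝ᵥ x = v ⬝ᵥ x - c * (x ⬝ᵥ x) := by
      simp [hwdef, sub_dotProduct, smul_dotProduct]
    rw [this, hc]
    field_simp
    simp
  by_contra hne
  have hwne : w ≠ 0 := by
    intro h0
    exact hne (by rw [← sub_eq_zero]; exact h0)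
  have := hlam2 w hwne hwx
  rw [hw] at this
  simp at this

lemma aux_key {n : ℕ} (S : Matrix (Fin n) (Fin n) ℝ) (hSpsd : S.PosSemidef)
    (x : Fin n → ℝ) (hxx : x ⬝ᵥ x ≠ 0)
    (hlam2 : ∀ y : Fin n → ℝ, y ≠ 0 → y ⬝ᵥ x = 0 → 0 < y ⬝ᵥ S.mulVec y)
    (hSx : S.mulVec x = 0)
    (Y : Matrix (Fin n) (Fin n) ℝ) (hY : Y.PosSemidef) :
    0 ≤ Matrix.trace (S * Y) ∧
      (Matrix.trace (S * Y) = 0 → ∃ t : ℝ, Y = t • Matrix.vecMulVec x x) := by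
  obtain ⟨C, hC⟩ : ∃ C : Matrix (Fin n) (Fin n) ℝ, Y = Cᴴ * C := by
    classical
    open scoped MatrixOrder in
    obtain ⟨X, hX, -, hXY⟩ :=
      CFC.exists_sqrt_of_isSelfAdjoint_of_quasispectrumRestricts hY.isHermitian
        (QuasispectrumRestricts.nnreal_of_nonneg hY.nonneg)
    exact ⟨X, by rw [← hXY, ← star_eq_conjTranspose, hX.star_eq]⟩
  have hdiag : ∀ k, (C * S * Cᴴ) k k = (fun i => C k i) ⬝ᵥ S.mulVec (fun i => C k i) := by
    intro k
    simp only [Matrix.mul_apply, Matrix.conjTranspose_apply, star_trivial,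
      dotProduct, Matrix.mulVec, Finset.sum_mul, Finset.mul_sum]
    rw [Finset.sum_comm]
    congr 1; ext j; congr 1; ext i; ring
  have htr : Matrix.trace (S * Y) = ∑ k, (fun i => C k i) ⬝ᵥ S.mulVec (fun i => C k i) := by
    rw [hC, ← Matrix.mul_assoc, Matrix.trace_mul_cycle]
    simp only [Matrix.trace, Matrix.diag]
    exact Finset.sum_congr rfl fun k _ => hdiag k
  have hterm : ∀ k, 0 ≤ (fun i => C k i) ⬝ᵥ S.mulVec (fun i => C k i) := by
    intro k
    have := hSpsd.dotProduct_mulVec_nonneg (fun i => C k i)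
    simpa using this
  constructor
  · rw [htr]; exact Finset.sum_nonneg fun k _ => hterm k
  · intro h0
    rw [htr] at h0
    have hzero : ∀ k ∈ Finset.univ, (fun i => C k i) ⬝ᵥ S.mulVec (fun i => C k i) = 0 :=
      (Finset.sum_eq_zero_iff_of_nonneg (fun k _ => hterm k)).mp h0
    have hSr : ∀ k, S.mulVec (fun i => C k i) = 0 := by
      intro k
      have := hzero k (Finset.mem_univ k)
      have h' : star (fun i => C k i) ⬝ᵥ S.mulVec (fun i => C k i) = 0 := by simpa using this
      exact (hSpsd.dotProduct_mulVec_zero_iff _).mp h'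
    set α : Fin n → ℝ := fun k => ((fun i => C k i) ⬝ᵥ x) / (x ⬝ᵥ x) with hα
    have hrk : ∀ k, (fun i => C k i) = α k • x := fun k =>
      aux_ker_lem S x hxx hlam2 hSx _ (hSr k)
    refine ⟨∑ k, (α k) ^ 2, ?_⟩
    ext i j
    have hCi : ∀ k i, C k i = α k * x i := by
      intro k i
      have := congrFun (hrk k) i
      simpa using this
    rw [hC]
    simp only [Matrix.mul_apply, Matrix.conjTranspose_apply, star_trivial,
      Matrix.smul_apply, Matrix.vecMulVec_apply, smul_eq_mul, Finset.sum_mul]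
    rw [Finset.sum_congr rfl fun k _ => by rw [hCi k i, hCi k j]]
    exact Finset.sum_congr rfl fun k _ => by ring

lemma aux_expand_trace {n : ℕ} (A B S : Matrix (Fin n) (Fin n) ℝ) (h : Fin n → ℝ) (η lam : ℝ)
    (hS : S = Matrix.diagonal h - B - A + η • (1 : Matrix (Fin n) (Fin n) ℝ)
        + lam • Matrix.of (fun _ _ => (1 : ℝ)))
    (M : Matrix (Fin n) (Fin n) ℝ) :
    Matrix.trace (A * M) = (∑ i, h i * M i i) - (∑ i, ∑ j, B i j * M j i)
      - Matrix.trace (S * M) + η * Matrix.trace M + lam * (∑ i, ∑ j, M i j) := by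
  have hmul : S * M = Matrix.diagonal h * M - B * M - A * M + η • M
      + lam • (Matrix.of (fun _ _ => (1:ℝ)) * M) := by
    rw [hS]
    simp only [Matrix.add_mul, Matrix.sub_mul, Matrix.smul_mul, Matrix.one_mul]
  have htr : Matrix.trace (S * M) = Matrix.trace (Matrix.diagonal h * M) - Matrix.trace (B * M)
      - Matrix.trace (A * M) + η * Matrix.trace M
      + lam * Matrix.trace (Matrix.of (fun _ _ => (1:ℝ)) * M) := by
    rw [hmul]
    simp [Matrix.trace_add, Matrix.trace_sub, Matrix.trace_smul, smul_eq_mul]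
  have td : Matrix.trace (Matrix.diagonal h * M) = ∑ i, h i * M i i := by
    rw [aux_trace_mul_eq]
    refine Finset.sum_congr rfl fun i _ => ?_
    rw [Finset.sum_eq_single i (fun j _ hj => by simp [Matrix.diagonal_apply_ne _ (Ne.symm hj)])
      (fun hi => absurd (Finset.mem_univ i) hi)]
    simp
  have tb : Matrix.trace (B * M) = ∑ i, ∑ j, B i j * M j i := aux_trace_mul_eq B M
  have tj : Matrix.trace (Matrix.of (fun _ _ => (1:ℝ)) * M) = ∑ i, ∑ j, M i j := by
    rw [aux_trace_mul_eq]
    rw [Finset.sum_comm]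
    simp
  rw [td, tb, tj] at htr
  linarith

lemma aux_feas {n : ℕ} (C1 C2 : Finset (Fin n)) (hdisj : Disjoint C1 C2)
    (hunion : C1 ∪ C2 = Finset.univ)
    (hcard1 : 2 * C1.card = n) (hcard2 : 2 * C2.card = n)
    (a b : ℝ) (hb : b < 0) (ha : 0 < a) (hb2 : b ^ 2 ≤ a ^ 2)
    (x : Fin n → ℝ) (hx : ∀ i, x i = if i ∈ C1 then a else b)
    (X : Matrix (Fin n) (Fin n) ℝ) (hX : X = Matrix.vecMulVec x x) :
    (∀ i, X i i ≤ a ^ 2) ∧ (∀ i j, a * b ≤ X i j) ∧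
    Matrix.trace X = ((n : ℝ) / 2) * (a ^ 2 + b ^ 2) ∧
    (∑ i, ∑ j, X i j) = ((n : ℝ) ^ 2 / 4) * (a + b) ^ 2 := by
  have hc1R : (C1.card : ℝ) = (n : ℝ) / 2 := by
    have : ((2 * C1.card : ℕ) : ℝ) = (n : ℝ) := by rw [hcard1]
    push_cast at this; linarith
  have hc2R : (C2.card : ℝ) = (n : ℝ) / 2 := by
    have : ((2 * C2.card : ℕ) : ℝ) = (n : ℝ) := by rw [hcard2]
    push_cast at this; linarith
  have hval : ∀ i, x i = a ∨ x i = b := by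
    intro i; rw [hx i]; by_cases hi : i ∈ C1 <;> simp [hi]
  have hsum : ∀ f : ℝ → ℝ, (∑ i, f (x i)) = ((n:ℝ)/2) * f a + ((n:ℝ)/2) * f b := by
    intro f
    rw [← hunion, Finset.sum_union hdisj]
    have h1 : ∑ i ∈ C1, f (x i) = C1.card * f a := by
      rw [Finset.sum_congr rfl fun i hi => by rw [hx i, if_pos hi]]
      simp [mul_comm]
    have h2 : ∑ i ∈ C2, f (x i) = C2.card * f b := by
      rw [Finset.sum_congr rfl fun i hi => by
        rw [hx i, if_neg (fun hc => (Finset.disjoint_left.mp hdisj) hc hi)]]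
      simp [mul_comm]
    rw [h1, h2, hc1R, hc2R]
  refine ⟨?_, ?_, ?_, ?_⟩
  · intro i
    rw [hX, Matrix.vecMulVec_apply]
    rcases hval i with h | h <;> rw [h] <;> nlinarith
  · intro i j
    rw [hX, Matrix.vecMulVec_apply]
    rcases hval i with h | h <;> rcases hval j with h' | h' <;> rw [h, h'] <;> nlinarith
  · rw [hX]
    have : Matrix.trace (Matrix.vecMulVec x x) = ∑ i, (fun t => t * t) (x i) := by
      simp [Matrix.trace, Matrix.diag, Matrix.vecMulVec_apply]
    rw [this, hsum (fun t => t * t)]; ring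
  · rw [hX]
    have : (∑ i, ∑ j, Matrix.vecMulVec x x i j) = (∑ i, x i) * (∑ j, x j) := by
      rw [Finset.sum_mul_sum]
      simp [Matrix.vecMulVec_apply]
    have hsx : (∑ i, x i) = ((n:ℝ)/2) * a + ((n:ℝ)/2) * b := hsum id
    rw [this, hsx]; ring

/-- Dual certificate sufficiency (Lemma 4): if there exist `H* = diag(h*) ≥ 0`,
`B* ≥ 0` symmetric, `η*, λ*` such that `S* = H* - B* - A + η*I + λ*J` is PSD with
positive second-smallest eigenvalue (positive on the orthogonal complement of `x*`),
`S*x* = 0`, and the complementary slackness conditions hold, then `X* = x* x*ᵀ`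
is the unique optimal solution of the SDP. -/
theorem dual_certificate_sufficiency {n : ℕ} (A : Matrix (Fin n) (Fin n) ℝ)
    (hA : A.IsSymm)
    (C1 C2 : Finset (Fin n)) (hdisj : Disjoint C1 C2) (hunion : C1 ∪ C2 = Finset.univ)
    (hcard1 : 2 * C1.card = n) (hcard2 : 2 * C2.card = n)
    (a b : ℝ) (hb : b < 0) (ha : 0 < a) (hab : a ≠ -b) (hb2 : b ^ 2 ≤ a ^ 2)
    (x : Fin n → ℝ) (hx : ∀ i, x i = if i ∈ C1 then a else b)
    (X : Matrix (Fin n) (Fin n) ℝ) (hX : X = Matrix.vecMulVec x x)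
    (h : Fin n → ℝ) (hh : ∀ i, 0 ≤ h i)
    (B : Matrix (Fin n) (Fin n) ℝ) (hBsym : B.IsSymm) (hBpos : ∀ i j, 0 ≤ B i j)
    (η lam : ℝ)
    (S : Matrix (Fin n) (Fin n) ℝ)
    (hS : S = Matrix.diagonal h - B - A + η • (1 : Matrix (Fin n) (Fin n) ℝ)
        + lam • Matrix.of (fun _ _ => (1 : ℝ)))
    (hSpsd : S.PosSemidef)
    (hlam2 : ∀ y : Fin n → ℝ, y ≠ 0 → y ⬝ᵥ x = 0 → 0 < y ⬝ᵥ S.mulVec y)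
    (hSx : S.mulVec x = 0)
    (hcs1 : ∀ i, h i * (X i i - a ^ 2) = 0)
    (hcs2 : ∀ i j, B i j * (X i j - a * b) = 0) :
    FeasibleSDP n a b X ∧
    ∀ Y, FeasibleSDP n a b Y → Y ≠ X →
      Matrix.trace (A * Y) < Matrix.trace (A * X) := by
  obtain ⟨hXd, hXe, hXtr, hXsum⟩ :=
    aux_feas C1 C2 hdisj hunion hcard1 hcard2 a b hb ha hb2 x hx X hX
  have hXpsd : X.PosSemidef := hX ▸ aux_psd_vecMulVec n x
  refine ⟨⟨hXpsd, hXd, hXe, hXtr, hXsum⟩, ?_⟩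
  intro Y hY hne
  rcases Nat.eq_zero_or_pos n with hn0 | hn
  · exfalso
    apply hne
    subst hn0
    ext i j
    exact i.elim0
  obtain ⟨Ypsd, hYd, hYe, hYtr, hYsum⟩ := hY
  have hval : ∀ i, x i = a ∨ x i = b := by
    intro i; rw [hx i]; by_cases hi : i ∈ C1 <;> simp [hi]
  have hxx : (0:ℝ) < x ⬝ᵥ x := by
    refine Finset.sum_pos' (fun i _ => mul_self_nonneg _) ⟨⟨0, hn⟩, Finset.mem_univ _, ?_⟩
    have : x ⟨0, hn⟩ ≠ 0 := by
      rcases hval ⟨0, hn⟩ with h' | h' <;> rw [h'] <;> [exact ne_of_gt ha; exact ne_of_lt hb]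
    exact mul_self_pos.mpr this
  have hSX : S * X = 0 := by
    ext i j
    rw [hX]
    simp only [Matrix.mul_apply, Matrix.vecMulVec_apply, Matrix.zero_apply]
    have hsx0 : (∑ k, S i k * x k) = 0 := by
      have := congrFun hSx i
      simpa [Matrix.mulVec, dotProduct] using this
    calc ∑ k, S i k * (x k * x j) = (∑ k, S i k * x k) * x j := by
          rw [Finset.sum_mul]
          exact Finset.sum_congr rfl fun k _ => by ring
      _ = 0 := by rw [hsx0]; ring
  have hkey := aux_key S hSpsd x (ne_of_gt hxx) hlam2 hSx Y Ypsd
  have eA_X := aux_expand_trace A B S h η lam hS X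
  have eA_Y := aux_expand_trace A B S h η lam hS Y
  have t1 : ∑ i, h i * Y i i ≤ ∑ i, h i * X i i := by
    refine Finset.sum_le_sum fun i _ => ?_
    have h1 : h i * X i i = h i * a ^ 2 := by
      have := hcs1 i; ring_nf at this ⊢; linarith
    rw [h1]
    exact mul_le_mul_of_nonneg_left (hYd i) (hh i)
  have t2 : ∑ i, ∑ j, B i j * X j i ≤ ∑ i, ∑ j, B i j * Y j i := by
    refine Finset.sum_le_sum fun i _ => Finset.sum_le_sum fun j _ => ?_
    have hXsymm : X j i = X i j := by rw [hX]; simp [Matrix.vecMulVec_apply, mul_comm]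
    have h2 : B i j * X j i = B i j * (a * b) := by
      rw [hXsymm]
      have := hcs2 i j; ring_nf at this ⊢; linarith
    rw [h2]
    exact mul_le_mul_of_nonneg_left (hYe j i) (hBpos i j)
  have hSXtr : Matrix.trace (S * X) = 0 := by rw [hSX]; simp
  have hSYtr : 0 ≤ Matrix.trace (S * Y) := hkey.1
  have hdiff : Matrix.trace (S * Y) ≤ Matrix.trace (A * X) - Matrix.trace (A * Y) := by
    rw [eA_X, eA_Y, hXtr, hYtr, hXsum, hYsum, hSXtr]
    linarith
  rcases lt_or_eq_of_le hSYtr with hpos | hzero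
  · linarith
  · exfalso
    obtain ⟨t, ht⟩ := hkey.2 hzero.symm
    have htY : Matrix.trace Y = t * Matrix.trace X := by
      rw [ht, ← hX, Matrix.trace_smul, smul_eq_mul]
    have hcne : Matrix.trace X ≠ 0 := by
      rw [hXtr]
      have h1 : (0:ℝ) < (n:ℝ) := by exact_mod_cast hn
      have h2 : (0:ℝ) < a ^ 2 + b ^ 2 := by positivity
      positivity
    have ht1 : t = 1 := by
      have : t * Matrix.trace X = 1 * Matrix.trace X := by
        rw [one_mul, ← htY, hYtr, hXtr]
      exact mul_right_cancel₀ hcne this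
    apply hne
    rw [ht, ← hX, ht1, one_smul]
end

section
/- Suppose the dual certificate conditions h*_i ≥ 0 for all i ∈ C₁ and b*_j ≥ 0 for all j ∈ C₂ hold, with a > 0 > b, h*_i = (1/a)[(B*x*)_i + (Ax*)_i - η*a - λ*1ᵀx*], and (B*x*)_i = b·Σ_{ℓ∈C₂} b*_ℓ for i ∈ C₁ (stripe structure), and a·(n/2)·b*_j = η*b + λ*1ᵀx* - (Ax*)_j. Then for every i ∈ C₁ and j ∈ C₂: b·Σ_{ℓ∈C₂} b*_ℓ + [(Ax*)_i - (Ax*)_j] ≥ η*(a - b) ≥ 0; in particular b·Σ_{ℓ∈C₂} b*_ℓ + [(Ax*)_i - (Ax*)_j] > 0 whenever η* > 0 and a > b. -/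
open Finset

/-- Combined nonnegativity: if the certificate conditions `h*_i ≥ 0` (for `i ∈ C₁`,
with `h*_i = (1/a)[(B*x*)_i + (Ax*)_i - η*a - λ*1ᵀx*]` and `(B*x*)_i = b·Σ b*_ℓ`)
and `b*_j ≥ 0` (for `j ∈ C₂`, with `a(n/2)b*_j = η*b + λ*1ᵀx* - (Ax*)_j`) hold,
then for all `i ∈ C₁`, `j ∈ C₂`:
`b·Σ_{ℓ∈C₂} b*_ℓ + [(Ax*)_i - (Ax*)_j] ≥ η*(a - b) ≥ 0`, and the quantity is
strictly positive whenever `η* > 0`. -/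
theorem combined_nonnegativity {n : ℕ} (hn : 0 < n)
    (C1 C2 : Finset (Fin n))
    (a b η lam1x : ℝ) (ha : 0 < a) (hb : b < 0) (hη : 0 ≤ η)
    (Ax bstar : Fin n → ℝ)
    (hh : ∀ i ∈ C1,
      0 ≤ (1 / a) * (b * (∑ ℓ ∈ C2, bstar ℓ) + Ax i - η * a - lam1x))
    (hbs : ∀ j ∈ C2, 0 ≤ bstar j)
    (hforce : ∀ j ∈ C2, a * ((n : ℝ) / 2) * bstar j = η * b + lam1x - Ax j) :
    ∀ i ∈ C1, ∀ j ∈ C2,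
      (η * (a - b) ≤ b * (∑ ℓ ∈ C2, bstar ℓ) + (Ax i - Ax j) ∧ 0 ≤ η * (a - b)) ∧
      (0 < η → 0 < b * (∑ ℓ ∈ C2, bstar ℓ) + (Ax i - Ax j)) := by
  intro i hi j hj
  have h1 := hh i hi
  have h2 := hbs j hj
  have h3 := hforce j hj
  have h4 : 0 ≤ b * (∑ ℓ ∈ C2, bstar ℓ) + Ax i - η * a - lam1x := by
    have := mul_nonneg (le_of_lt ha) h1
    field_simp at this
    linarith
  have h5 : 0 ≤ a * ((n : ℝ) / 2) * bstar j := by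
    have : (0:ℝ) ≤ (n:ℝ)/2 := by positivity
    positivity
  have hab : 0 < a - b := by linarith
  have hmain : η * (a - b) ≤ b * (∑ ℓ ∈ C2, bstar ℓ) + (Ax i - Ax j) := by nlinarith
  refine ⟨⟨hmain, mul_nonneg hη hab.le⟩, fun hηp => ?_⟩
  have : 0 < η * (a - b) := mul_pos hηp hab
  linarith
end
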